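/- Assume Σ is reachable from x* and controllable to x*, and that Σ is cyclo-lossless with respect to x* (every trajectory beginning and ending at x* has zero supply). Then F_ac(x) = F_rc(x) for all states x, and the storage function is unique up to an additive constant: any two storage functions F₁, F₂ satisfy F₁ − F₂ = const. -/

import Mathlib

/-! Gluing a trajectory from `xs` to `x` with a time-shifted trajectory from `x` back to `xs`
gives a cycle through `xs`, whose supply vanishes. Hence every trajectory from `xs` to `x` has
the same supply `W x`, and every trajectory from `x` to `xs` has supply `-W x`: both `Sac` and
`Src` are the singleton `{W x}`, and the dissipation inequality along the two legs forces
`F x - F xs = W x` for every storage function `F`. -/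

open MeasureTheory

/-- A trajectory of the control system `ẋ = f(x,u)` with supply rate `s`,
on an interval `[t₁, t₂]`. -/
structure Traj {n m : ℕ} (f : (Fin n → ℝ) → (Fin m → ℝ) → (Fin n → ℝ))
    (s : (Fin n → ℝ) → (Fin m → ℝ) → ℝ) where
  t₁ : ℝ
  t₂ : ℝ
  hle : t₁ ≤ t₂
  x : ℝ → Fin n → ℝ
  u : ℝ → Fin m → ℝ
  hu : Measurable u
  hx : Continuous x
  hf : IntervalIntegrable (fun t => f (x t) (u t)) volume t₁ t₂
  hs : IntervalIntegrable (fun t => s (x t) (u t)) volume t₁ t₂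
  hdyn : ∀ t ∈ Set.Icc t₁ t₂, x t = x t₁ + ∫ τ in t₁..t, f (x τ) (u τ)

/-- The supply of a trajectory. -/
noncomputable def Traj.supply {n m : ℕ} {f : (Fin n → ℝ) → (Fin m → ℝ) → (Fin n → ℝ)}
    {s : (Fin n → ℝ) → (Fin m → ℝ) → ℝ} (T : Traj f s) : ℝ :=
  ∫ t in T.t₁..T.t₂, s (T.x t) (T.u t)

/-- `F` is a storage function: the dissipation inequality holds along all trajectories. -/
def IsStorage {n m : ℕ} (f : (Fin n → ℝ) → (Fin m → ℝ) → (Fin n → ℝ))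
    (s : (Fin n → ℝ) → (Fin m → ℝ) → ℝ) (F : (Fin n → ℝ) → ℝ) : Prop :=
  ∀ T : Traj f s, F (T.x T.t₂) - F (T.x T.t₁) ≤ T.supply

/-- Cyclo-dissipativity with respect to the ground state `xs`: nonnegative supply along
every trajectory beginning and ending at `xs`. -/
def CycloDissipativeWrt {n m : ℕ} (f : (Fin n → ℝ) → (Fin m → ℝ) → (Fin n → ℝ))
    (s : (Fin n → ℝ) → (Fin m → ℝ) → ℝ) (xs : Fin n → ℝ) : Prop :=
  ∀ T : Traj f s, T.x T.t₁ = xs → T.x T.t₂ = xs → 0 ≤ T.supply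

/-- The set of values `-supply` over trajectories from `x` to `xs`. -/
def Sac {n m : ℕ} (f : (Fin n → ℝ) → (Fin m → ℝ) → (Fin n → ℝ))
    (s : (Fin n → ℝ) → (Fin m → ℝ) → ℝ) (xs x : Fin n → ℝ) : Set ℝ :=
  {r : ℝ | ∃ T : Traj f s, T.x T.t₁ = x ∧ T.x T.t₂ = xs ∧ r = -T.supply}

/-- The set of values `supply` over trajectories from `xs` to `x`. -/
def Src {n m : ℕ} (f : (Fin n → ℝ) → (Fin m → ℝ) → (Fin n → ℝ))
    (s : (Fin n → ℝ) → (Fin m → ℝ) → ℝ) (xs x : Fin n → ℝ) : Set ℝ :=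
  {r : ℝ | ∃ T : Traj f s, T.x T.t₁ = xs ∧ T.x T.t₂ = x ∧ r = T.supply}

def CycloLosslessWrt {n m : ℕ} (f : (Fin n → ℝ) → (Fin m → ℝ) → (Fin n → ℝ))
    (s : (Fin n → ℝ) → (Fin m → ℝ) → ℝ) (xs : Fin n → ℝ) : Prop :=
  ∀ T : Traj f s, T.x T.t₁ = xs → T.x T.t₂ = xs → T.supply = 0

section Piecewise

variable {E : Type*} [NormedAddCommGroup E] {g₁ g₂ : ℝ → E} {a b c : ℝ}

theorem IntervalIntegrable.ite_le (hab : a ≤ b) (hbc : b ≤ c)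
    (h₁ : IntervalIntegrable g₁ volume a b) (h₂ : IntervalIntegrable g₂ volume b c) :
    IntervalIntegrable (fun t => if t ≤ b then g₁ t else g₂ t) volume a c := by
  refine IntervalIntegrable.trans (b := b) (h₁.congr fun t ht => ?_) (h₂.congr fun t ht => ?_)
  · rw [Set.uIoc_of_le hab] at ht
    exact (if_pos ht.2).symm
  · rw [Set.uIoc_of_le hbc] at ht
    exact (if_neg (not_le.2 ht.1)).symm

theorem intervalIntegral.integral_ite_le [NormedSpace ℝ E] (hab : a ≤ b) (hbc : b ≤ c)
    (h₁ : IntervalIntegrable g₁ volume a b) (h₂ : IntervalIntegrable g₂ volume b c) :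
    ∫ t in a..c, (if t ≤ b then g₁ t else g₂ t) = (∫ t in a..b, g₁ t) + ∫ t in b..c, g₂ t := by
  rw [← integral_add_adjacent_intervals (b := b) (h₁.ite_le hab le_rfl .refl)
    (IntervalIntegrable.ite_le le_rfl hbc .refl h₂)]
  congr 1
  · exact integral_congr_Ioo_of_le hab fun t ht => if_pos ht.2.le
  · exact integral_congr_Ioo_of_le hbc fun t ht => if_neg (not_le.2 ht.1)

theorem ite_le_eq_add_integral_ite_le [NormedSpace ℝ E] {x₁ x₂ : ℝ → E} (hab : a ≤ b)
    (hbc : b ≤ c) (h₁ : IntervalIntegrable g₁ volume a b) (h₂ : IntervalIntegrable g₂ volume b c)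
    (hx₁ : ∀ t ∈ Set.Icc a b, x₁ t = x₁ a + ∫ τ in a..t, g₁ τ)
    (hx₂ : ∀ t ∈ Set.Icc b c, x₂ t = x₂ b + ∫ τ in b..t, g₂ τ) (hb : x₁ b = x₂ b) :
    ∀ t ∈ Set.Icc a c,
      (if t ≤ b then x₁ t else x₂ t) = x₁ a + ∫ τ in a..t, if τ ≤ b then g₁ τ else g₂ τ := by
  intro t ⟨hat, htc⟩
  by_cases htb : t ≤ b
  · rw [if_pos htb, hx₁ t ⟨hat, htb⟩, intervalIntegral.integral_congr fun τ hτ => ?_]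
    rw [Set.uIcc_of_le hat] at hτ
    exact (if_pos (hτ.2.trans htb)).symm
  · have hbt : b ≤ t := (not_le.1 htb).le
    rw [if_neg htb, hx₂ t ⟨hbt, htc⟩, ← hb, hx₁ b ⟨hab, le_rfl⟩, add_assoc,
      intervalIntegral.integral_ite_le hab hbt h₁ (h₂.mono_set ?_)]
    rw [Set.uIcc_of_le hbt, Set.uIcc_of_le hbc]
    exact Set.Icc_subset_Icc le_rfl htc

end Piecewise

section Trajectories

variable {n m : ℕ} {f : (Fin n → ℝ) → (Fin m → ℝ) → (Fin n → ℝ)}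
  {s : (Fin n → ℝ) → (Fin m → ℝ) → ℝ}

namespace Traj

noncomputable def shift (T : Traj f s) (δ : ℝ) : Traj f s where
  t₁ := T.t₁ + δ
  t₂ := T.t₂ + δ
  hle := add_le_add_left T.hle δ
  x t := T.x (t - δ)
  u t := T.u (t - δ)
  hu := T.hu.comp (measurable_id.sub_const δ)
  hx := T.hx.comp (continuous_id.sub continuous_const)
  hf := T.hf.comp_sub_right δ
  hs := T.hs.comp_sub_right δ
  hdyn t ht := by
    rw [intervalIntegral.integral_comp_sub_right (fun τ => f (T.x τ) (T.u τ)),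
      add_sub_cancel_right]
    exact T.hdyn (t - δ) ⟨le_sub_iff_add_le.2 ht.1, sub_le_iff_le_add.2 ht.2⟩

@[simp] theorem shift_x_t₁ (T : Traj f s) (δ : ℝ) : (T.shift δ).x (T.shift δ).t₁ = T.x T.t₁ :=
  congrArg T.x (add_sub_cancel_right _ _)

@[simp] theorem shift_x_t₂ (T : Traj f s) (δ : ℝ) : (T.shift δ).x (T.shift δ).t₂ = T.x T.t₂ :=
  congrArg T.x (add_sub_cancel_right _ _)

@[simp] theorem supply_shift (T : Traj f s) (δ : ℝ) : (T.shift δ).supply = T.supply := by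
  simp only [supply, shift]
  rw [intervalIntegral.integral_comp_sub_right (fun τ => s (T.x τ) (T.u τ)), add_sub_cancel_right,
    add_sub_cancel_right]

noncomputable def append (T₁ T₂ : Traj f s) (ht : T₁.t₂ = T₂.t₁) (hx : T₁.x T₁.t₂ = T₂.x T₂.t₁) :
    Traj f s where
  t₁ := T₁.t₁
  t₂ := T₂.t₂
  hle := T₁.hle.trans (ht ▸ T₂.hle)
  x t := if t ≤ T₁.t₂ then T₁.x t else T₂.x t
  u t := if t ≤ T₁.t₂ then T₁.u t else T₂.u t
  hu := Measurable.ite measurableSet_Iic T₁.hu T₂.hu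
  hx := T₁.hx.if_le T₂.hx continuous_id continuous_const fun t h => by rw [h, hx, ht]
  hf := by
    simp only [apply_ite₂]
    exact T₁.hf.ite_le T₁.hle (ht ▸ T₂.hle) (ht ▸ T₂.hf)
  hs := by
    simp only [apply_ite₂]
    exact T₁.hs.ite_le T₁.hle (ht ▸ T₂.hle) (ht ▸ T₂.hs)
  hdyn t ht' := by
    simp only [apply_ite₂, if_pos T₁.hle]
    exact ite_le_eq_add_integral_ite_le T₁.hle (ht ▸ T₂.hle) T₁.hf (ht ▸ T₂.hf) T₁.hdyn
      (ht ▸ T₂.hdyn) (ht ▸ hx) t ht'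

section append

variable (T₁ T₂ : Traj f s) (ht : T₁.t₂ = T₂.t₁) (hx : T₁.x T₁.t₂ = T₂.x T₂.t₁)

@[simp] theorem append_x_t₁ : (T₁.append T₂ ht hx).x (T₁.append T₂ ht hx).t₁ = T₁.x T₁.t₁ :=
  if_pos T₁.hle

@[simp] theorem append_x_t₂ : (T₁.append T₂ ht hx).x (T₁.append T₂ ht hx).t₂ = T₂.x T₂.t₂ := by
  change (if T₂.t₂ ≤ T₁.t₂ then T₁.x T₂.t₂ else T₂.x T₂.t₂) = _
  split_ifs with h
  · have hdeg : T₂.t₂ = T₁.t₂ := le_antisymm h (ht ▸ T₂.hle)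
    rw [hdeg, hx, ht]
  · rfl

@[simp] theorem supply_append : (T₁.append T₂ ht hx).supply = T₁.supply + T₂.supply := by
  simp only [supply, append, apply_ite₂]
  rw [intervalIntegral.integral_ite_le T₁.hle (ht ▸ T₂.hle) T₁.hs (ht ▸ T₂.hs), ht]

end append

theorem exists_concat (T₁ T₂ : Traj f s) (h : T₁.x T₁.t₂ = T₂.x T₂.t₁) :
    ∃ T : Traj f s, T.x T.t₁ = T₁.x T₁.t₁ ∧ T.x T.t₂ = T₂.x T₂.t₂ ∧
      T.supply = T₁.supply + T₂.supply := by
  have ht : T₁.t₂ = (T₂.shift (T₁.t₂ - T₂.t₁)).t₁ := (add_sub_cancel _ _).symm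
  refine ⟨T₁.append (T₂.shift (T₁.t₂ - T₂.t₁)) ht (by rw [shift_x_t₁, h]), ?_⟩
  simp

end Traj

namespace CycloLosslessWrt

variable {xs x : Fin n → ℝ}

theorem supply_add_supply_eq_zero (h : CycloLosslessWrt f s xs) {S T : Traj f s}
    (hS : S.x S.t₁ = xs) (hST : S.x S.t₂ = T.x T.t₁) (hT : T.x T.t₂ = xs) :
    S.supply + T.supply = 0 := by
  obtain ⟨C, hC₁, hC₂, hC⟩ := S.exists_concat T hST
  exact hC ▸ h C (hC₁.trans hS) (hC₂.trans hT)

theorem sac_eq_singleton (h : CycloLosslessWrt f s xs) {S : Traj f s}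
    (hS₁ : S.x S.t₁ = xs) (hS₂ : S.x S.t₂ = x)
    (hctrl : ∃ T : Traj f s, T.x T.t₁ = x ∧ T.x T.t₂ = xs) : Sac f s xs x = {S.supply} := by
  ext r
  constructor
  · rintro ⟨T, hT₁, hT₂, rfl⟩
    refine Set.mem_singleton_iff.2 ?_
    linarith [h.supply_add_supply_eq_zero hS₁ (hS₂.trans hT₁.symm) hT₂]
  · rintro rfl
    obtain ⟨T, hT₁, hT₂⟩ := hctrl
    exact ⟨T, hT₁, hT₂, by linarith [h.supply_add_supply_eq_zero hS₁ (hS₂.trans hT₁.symm) hT₂]⟩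

theorem src_eq_singleton (h : CycloLosslessWrt f s xs) {T : Traj f s}
    (hT₁ : T.x T.t₁ = x) (hT₂ : T.x T.t₂ = xs)
    (hreach : ∃ S : Traj f s, S.x S.t₁ = xs ∧ S.x S.t₂ = x) : Src f s xs x = {-T.supply} := by
  ext r
  constructor
  · rintro ⟨S, hS₁, hS₂, rfl⟩
    refine Set.mem_singleton_iff.2 ?_
    linarith [h.supply_add_supply_eq_zero hS₁ (hS₂.trans hT₁.symm) hT₂]
  · rintro rfl
    obtain ⟨S, hS₁, hS₂⟩ := hreach
    exact ⟨S, hS₁, hS₂, by linarith [h.supply_add_supply_eq_zero hS₁ (hS₂.trans hT₁.symm) hT₂]⟩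

theorem sSup_sac_eq_sInf_src (h : CycloLosslessWrt f s xs)
    (hreach : ∃ S : Traj f s, S.x S.t₁ = xs ∧ S.x S.t₂ = x)
    (hctrl : ∃ T : Traj f s, T.x T.t₁ = x ∧ T.x T.t₂ = xs) :
    sSup (Sac f s xs x) = sInf (Src f s xs x) := by
  obtain ⟨S, hS₁, hS₂⟩ := hreach
  obtain ⟨T, hT₁, hT₂⟩ := hctrl
  rw [h.sac_eq_singleton hS₁ hS₂ ⟨T, hT₁, hT₂⟩, h.src_eq_singleton hT₁ hT₂ ⟨S, hS₁, hS₂⟩,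
    csSup_singleton, csInf_singleton]
  linarith [h.supply_add_supply_eq_zero hS₁ (hS₂.trans hT₁.symm) hT₂]

theorem storage_sub_eq_supply (h : CycloLosslessWrt f s xs) {F : (Fin n → ℝ) → ℝ}
    (hF : IsStorage f s F) {S T : Traj f s}
    (hS₁ : S.x S.t₁ = xs) (hS₂ : S.x S.t₂ = x) (hT₁ : T.x T.t₁ = x) (hT₂ : T.x T.t₂ = xs) :
    F x - F xs = S.supply := by
  have hFS := hF S
  have hFT := hF T
  rw [hS₁, hS₂] at hFS
  rw [hT₁, hT₂] at hFT
  linarith [h.supply_add_supply_eq_zero hS₁ (hS₂.trans hT₁.symm) hT₂]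

theorem storage_sub_storage_eq (h : CycloLosslessWrt f s xs) {F₁ F₂ : (Fin n → ℝ) → ℝ}
    (hF₁ : IsStorage f s F₁) (hF₂ : IsStorage f s F₂)
    (hreach : ∃ S : Traj f s, S.x S.t₁ = xs ∧ S.x S.t₂ = x)
    (hctrl : ∃ T : Traj f s, T.x T.t₁ = x ∧ T.x T.t₂ = xs) :
    F₁ x - F₂ x = F₁ xs - F₂ xs := by
  obtain ⟨S, hS₁, hS₂⟩ := hreach
  obtain ⟨T, hT₁, hT₂⟩ := hctrl
  linarith [h.storage_sub_eq_supply hF₁ hS₁ hS₂ hT₁ hT₂,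
    h.storage_sub_eq_supply hF₂ hS₁ hS₂ hT₁ hT₂]

end CycloLosslessWrt

end Trajectories

theorem cycloLosslessWrt_storage_unique_general {n m : ℕ}
    (f : (Fin n → ℝ) → (Fin m → ℝ) → (Fin n → ℝ))
    (s : (Fin n → ℝ) → (Fin m → ℝ) → ℝ)
    (xs : Fin n → ℝ)
    (hreach : ∀ x : Fin n → ℝ, ∃ T : Traj f s, T.x T.t₁ = xs ∧ T.x T.t₂ = x)
    (hctrl : ∀ x : Fin n → ℝ, ∃ T : Traj f s, T.x T.t₁ = x ∧ T.x T.t₂ = xs)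
    (hloss : ∀ T : Traj f s, T.x T.t₁ = xs → T.x T.t₂ = xs → T.supply = 0) :
    (∀ x, sSup (Sac f s xs x) = sInf (Src f s xs x)) ∧
    (∀ F₁ F₂ : (Fin n → ℝ) → ℝ, IsStorage f s F₁ → IsStorage f s F₂ →
      ∃ c : ℝ, ∀ x, F₁ x - F₂ x = c) := by
  have h : CycloLosslessWrt f s xs := hloss
  exact ⟨fun x => h.sSup_sac_eq_sInf_src (hreach x) (hctrl x), fun F₁ F₂ hF₁ hF₂ =>
    ⟨F₁ xs - F₂ xs, fun x => h.storage_sub_storage_eq hF₁ hF₂ (hreach x) (hctrl x)⟩⟩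

/-- If the system is reachable from and controllable to `xs`, and cyclo-lossless with
respect to `xs` (every trajectory beginning and ending at `xs` has zero supply), then
`F_ac = F_rc` everywhere and the storage function is unique up to an additive constant. -/
theorem cycloLosslessWrt_storage_unique {n m : ℕ}
    (f : (Fin n → ℝ) → (Fin m → ℝ) → (Fin n → ℝ))
    (s : (Fin n → ℝ) → (Fin m → ℝ) → ℝ)
    (hfc : Continuous fun q : (Fin n → ℝ) × (Fin m → ℝ) => f q.1 q.2)
    (hsc : Continuous fun q : (Fin n → ℝ) × (Fin m → ℝ) => s q.1 q.2)
    (xs : Fin n → ℝ)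
    (hreach : ∀ x : Fin n → ℝ, ∃ T : Traj f s, T.x T.t₁ = xs ∧ T.x T.t₂ = x)
    (hctrl : ∀ x : Fin n → ℝ, ∃ T : Traj f s, T.x T.t₁ = x ∧ T.x T.t₂ = xs)
    (hloss : ∀ T : Traj f s, T.x T.t₁ = xs → T.x T.t₂ = xs → T.supply = 0) :
    (∀ x, sSup (Sac f s xs x) = sInf (Src f s xs x)) ∧
    (∀ F₁ F₂ : (Fin n → ℝ) → ℝ, IsStorage f s F₁ → IsStorage f s F₂ →
      ∃ c : ℝ, ∀ x, F₁ x - F₂ x = c) :=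
  cycloLosslessWrt_storage_unique_general f s xs hreach hctrl hloss
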